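/- Let c ≥ 3 be an odd integer, ℓ ∈ ℕ, t ∈ M_{c,ℓ}, and let A be a real m×n matrix. Let p be the constant floating coloring with value t. Then there exist floating colorings q^{(0)} = p, q^{(1)}, …, q^{(ℓ)} such that for each i ∈ {0,…,ℓ}: q^{(i)} takes values in M_{c,ℓ−i}, q^{(i)} takes at most two distinct values, and for i < ℓ, d_A(q^{(i)}, q^{(i+1)}) ≤ (c − 1)·c^{−ℓ+i+1} · herdisc(A, c). In particular, q^{(ℓ)} takes values in {0,1} and d_A(p, q^{(ℓ)}) ≤ c · herdisc(A, c). -/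
import Mathlib


open Finset

/-- `c`-color discrepancy of a matrix: minimum over `c`-colorings `p` of the columns of the
maximum over colors `d` and rows `i` of `|∑_{j : p j = d} A i j - (1/c) ∑_j A i j|`. -/
noncomputable def mdisc {ι κ : Type*} [Fintype ι] [Fintype κ] (A : ι → κ → ℝ) (c : ℕ) : ℝ :=
  ⨅ p : κ → Fin c, ⨆ d : Fin c, ⨆ i : ι,
    |∑ j ∈ Finset.univ.filter (fun j => p j = d), A i j - (1 / (c : ℝ)) * ∑ j, A i j|

/-- hereditary `c`-color discrepancy: maximum of `mdisc` over all nonempty column submatrices. -/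
noncomputable def mherdisc {ι : Type*} [Fintype ι] {n : ℕ} (A : ι → Fin n → ℝ) (c : ℕ) : ℝ :=
  ⨆ J : {J : Finset (Fin n) // J.Nonempty}, mdisc (fun i (j : {x // x ∈ J.1}) => A i j.1) c

/-- `d_A(p,q) = max_i |∑_j a_{ij} (p j - q j)|` for floating colorings `p, q`. -/
noncomputable def dA {ι κ : Type*} [Fintype ι] [Fintype κ] (A : ι → κ → ℝ) (p q : κ → ℝ) : ℝ :=
  ⨆ i : ι, |∑ j, A i j * (p j - q j)|

/-- weighted discrepancy with weight `z`: min over `{0,1}`-colorings `q` of `d_A(z·1, q)`. -/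
noncomputable def wdisc {ι κ : Type*} [Fintype ι] [Fintype κ] (A : ι → κ → ℝ) (z : ℝ) : ℝ :=
  ⨅ q : κ → Bool, dA A (fun _ => z) (fun j => if q j then 1 else 0)

/-- `M_{c,ℓ}`: numbers in `[0,1]` with a `c`-ary expansion `∑_{i=0}^ℓ a_i c^{-i}`,
with digits `a_i ∈ {0, …, c-1}`. -/
def Mset (c ℓ : ℕ) : Set ℝ :=
  {x | x ∈ Set.Icc (0:ℝ) 1 ∧
    ∃ a : Fin (ℓ+1) → ℕ, (∀ i, a i < c) ∧ x = ∑ i, (a i : ℝ) / (c : ℝ) ^ (i : ℕ)}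

/-! ### Auxiliary lemmas -/

lemma IR.le_fciSup {α : Type*} [Finite α] (f : α → ℝ) (a : α) : f a ≤ ⨆ x, f x :=
  le_ciSup (Set.Finite.bddAbove (Set.finite_range f)) a

lemma IR.exists_digits {c : ℕ} (hc : 2 ≤ c) :
    ∀ (L N : ℕ), N ≤ c^L → ∃ a : Fin (L+1) → ℕ, (∀ i, a i < c) ∧
      N = ∑ i : Fin (L+1), a i * c^(L - (i:ℕ)) := by
  intro L
  induction L with
  | zero =>
    intro N hN
    simp only [pow_zero] at hN
    exact ⟨fun _ => N, fun i => by simpa using lt_of_le_of_lt hN (by omega), by simp⟩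
  | succ L ih =>
    intro N hN
    have hc0 : 0 < c := by omega
    have hM : N / c ≤ c ^ L := by
      have h1 := Nat.div_le_div_right (c := c) hN
      have h2 : c ^ (L+1) / c = c ^ L := by
        rw [pow_succ, Nat.mul_div_assoc _ dvd_rfl, Nat.div_self hc0, mul_one]
      rwa [h2] at h1
    obtain ⟨b, hb, hbsum⟩ := ih (N / c) hM
    refine ⟨Fin.snoc b (N % c), ?_, ?_⟩
    · intro i
      rcases Fin.eq_castSucc_or_eq_last i with ⟨j, rfl⟩ | rfl
      · simpa using hb j
      · simpa using Nat.mod_lt _ hc0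
    · rw [Fin.sum_univ_castSucc]
      simp only [Fin.snoc_castSucc, Fin.snoc_last, Fin.val_last, Nat.sub_self, pow_zero,
        mul_one, Fin.coe_castSucc]
      have key : ∀ i : Fin (L+1), b i * c ^ (L + 1 - (i:ℕ)) = (b i * c ^ (L - (i:ℕ))) * c := by
        intro i
        have h3 : L + 1 - (i:ℕ) = (L - (i:ℕ)) + 1 := by
          have := Fin.is_le i; omega
        rw [h3, pow_succ]; ring
      rw [Finset.sum_congr rfl (fun i _ => key i), ← Finset.sum_mul, ← hbsum, mul_comm]
      exact (Nat.div_add_mod N c).symm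

lemma IR.mem_Mset_of_natCast {c : ℕ} (hc : 2 ≤ c) (L N : ℕ) (hN : N ≤ c^L) :
    (N : ℝ) / (c:ℝ)^L ∈ Mset c L := by
  have hc0 : (0:ℝ) < c := by positivity
  have hcL : (0:ℝ) < (c:ℝ)^L := by positivity
  obtain ⟨a, ha, hsum⟩ := IR.exists_digits hc L N hN
  refine ⟨⟨by positivity, ?_⟩, a, ha, ?_⟩
  · rw [div_le_one hcL]
    exact_mod_cast hN
  · symm
    rw [eq_div_iff hcL.ne']
    have key : ∀ i : Fin (L+1), (a i:ℝ)/(c:ℝ)^(i:ℕ) * (c:ℝ)^L = (a i) * (c:ℝ)^(L-(i:ℕ)) := by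
      intro i
      have hi : (i:ℕ) ≤ L := Fin.is_le i
      have hpow : (c:ℝ)^L = (c:ℝ)^(L-(i:ℕ)) * (c:ℝ)^(i:ℕ) := by
        rw [← pow_add, Nat.sub_add_cancel hi]
      rw [hpow]
      field_simp
    rw [Finset.sum_mul, Finset.sum_congr rfl (fun i _ => key i)]
    exact_mod_cast hsum.symm

lemma IR.Mset_num {c L : ℕ} (hc : 2 ≤ c) {t : ℝ} (ht : t ∈ Mset c L) :
    ∃ N : ℕ, N ≤ c^L ∧ t = (N:ℝ)/(c:ℝ)^L := by
  obtain ⟨⟨ht0, ht1⟩, a, ha, hta⟩ := ht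
  have hc0 : (0:ℝ) < c := by positivity
  have hcL : (0:ℝ) < (c:ℝ)^L := by positivity
  have key : ∀ i : Fin (L+1), (a i:ℝ)/(c:ℝ)^(i:ℕ) * (c:ℝ)^L = (a i) * (c:ℝ)^(L-(i:ℕ)) := by
    intro i
    have hi : (i:ℕ) ≤ L := Fin.is_le i
    have hpow : (c:ℝ)^L = (c:ℝ)^(L-(i:ℕ)) * (c:ℝ)^(i:ℕ) := by
      rw [← pow_add, Nat.sub_add_cancel hi]
    rw [hpow]
    field_simp
  have hsum : t * (c:ℝ)^L = ((∑ i : Fin (L+1), a i * c^(L-(i:ℕ)) : ℕ) : ℝ) := by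
    rw [hta, Finset.sum_mul, Finset.sum_congr rfl (fun i _ => key i)]
    push_cast
    rfl
  refine ⟨∑ i : Fin (L+1), a i * c^(L - (i:ℕ)), ?_, ?_⟩
  · have h1 : ((∑ i : Fin (L+1), a i * c^(L-(i:ℕ)) : ℕ) : ℝ) ≤ ((c^L : ℕ) : ℝ) := by
      rw [← hsum]
      push_cast
      nlinarith
    exact_mod_cast h1
  · rw [eq_div_iff hcL.ne']
    exact hsum

lemma IR.card_filter_val_lt (c k : ℕ) (hk : k ≤ c) :
    ((Finset.univ : Finset (Fin c)).filter (fun d : Fin c => (d:ℕ) < k)).card = k := by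
  have h : ∀ m ∈ Finset.range k, m < c := fun m hm =>
    lt_of_lt_of_le (Finset.mem_range.1 hm) hk
  have e : (Finset.univ : Finset (Fin c)).filter (fun d : Fin c => (d:ℕ) < k)
      = (Finset.range k).attachFin h := by
    ext d
    simp [Finset.mem_attachFin, Finset.mem_range]
  rw [e, Finset.card_attachFin, Finset.card_range]

lemma IR.mdisc_nonneg {ι κ : Type*} [Fintype ι] [Fintype κ] [Nonempty ι] (A : ι → κ → ℝ)
    {c : ℕ} (hc : 0 < c) : 0 ≤ mdisc A c := by
  haveI : Nonempty (Fin c) := ⟨⟨0, hc⟩⟩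
  refine le_ciInf fun p => ?_
  obtain ⟨d⟩ := (inferInstance : Nonempty (Fin c))
  obtain ⟨r⟩ := (inferInstance : Nonempty ι)
  calc (0:ℝ) ≤ |∑ j ∈ Finset.univ.filter (fun j => p j = d), A r j - (1/(c:ℝ)) * ∑ j, A r j| :=
        abs_nonneg _
    _ ≤ ⨆ i : ι, |∑ j ∈ Finset.univ.filter (fun j => p j = d), A i j - (1/(c:ℝ)) * ∑ j, A i j| :=
        IR.le_fciSup (fun i : ι =>
          |∑ j ∈ Finset.univ.filter (fun j => p j = d), A i j - (1/(c:ℝ)) * ∑ j, A i j|) r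
    _ ≤ ⨆ d' : Fin c, ⨆ i : ι,
          |∑ j ∈ Finset.univ.filter (fun j => p j = d'), A i j - (1/(c:ℝ)) * ∑ j, A i j| :=
        IR.le_fciSup (fun d' : Fin c => ⨆ i : ι,
          |∑ j ∈ Finset.univ.filter (fun j => p j = d'), A i j - (1/(c:ℝ)) * ∑ j, A i j|) d

lemma IR.mherdisc_nonneg {ι : Type*} [Fintype ι] [Nonempty ι] {n : ℕ} (A : ι → Fin n → ℝ)
    {c : ℕ} (hc : 0 < c) : 0 ≤ mherdisc A c :=
  Real.iSup_nonneg fun _ => IR.mdisc_nonneg _ hc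

lemma IR.exists_coloring {m n : ℕ} (hm : 0 < m) (A : Fin m → Fin n → ℝ) {c : ℕ} (hc : 0 < c)
    (J : Finset (Fin n)) :
    ∃ p : Fin n → Fin c, ∀ (d : Fin c) (r : Fin m),
      |∑ j ∈ J.filter (fun j => p j = d), A r j - 1/(c:ℝ) * ∑ j ∈ J, A r j| ≤ mherdisc A c := by
  classical
  haveI hcne : Nonempty (Fin c) := ⟨⟨0, hc⟩⟩
  haveI hmne : Nonempty (Fin m) := ⟨⟨0, hm⟩⟩
  have hH0 : 0 ≤ mherdisc A c := IR.mherdisc_nonneg A hc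
  rcases J.eq_empty_or_nonempty with rfl | hJ
  · exact ⟨fun _ => ⟨0, hc⟩, fun d r => by simpa using hH0⟩
  set B := fun (r : Fin m) (j : {x // x ∈ J}) => A r j.1 with hB
  obtain ⟨p0, hp0⟩ := Finite.exists_min (fun p : {x // x ∈ J} → Fin c =>
    ⨆ d : Fin c, ⨆ r : Fin m,
      |∑ j ∈ Finset.univ.filter (fun j => p j = d), B r j - (1/(c:ℝ)) * ∑ j, B r j|)
  have hval : (⨆ d : Fin c, ⨆ r : Fin m,
      |∑ j ∈ Finset.univ.filter (fun j => p0 j = d), B r j - (1/(c:ℝ)) * ∑ j, B r j|)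
      ≤ mherdisc A c := by
    have h1 : (⨆ d : Fin c, ⨆ r : Fin m,
        |∑ j ∈ Finset.univ.filter (fun j => p0 j = d), B r j - (1/(c:ℝ)) * ∑ j, B r j|)
        ≤ mdisc B c := le_ciInf hp0
    have h2 : mdisc B c ≤ mherdisc A c :=
      le_ciSup (f := fun J' : {J : Finset (Fin n) // J.Nonempty} =>
        mdisc (fun i (j : {x // x ∈ J'.1}) => A i j.1) c)
        (Set.Finite.bddAbove (Set.finite_range _)) ⟨J, hJ⟩
    exact h1.trans h2
  refine ⟨fun j => if h : j ∈ J then p0 ⟨j, h⟩ else ⟨0, hc⟩, fun d r => ?_⟩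
  have e1 : ∑ j ∈ J, A r j = ∑ j, B r j := (Finset.sum_coe_sort J (A r)).symm
  have e2 : ∑ j ∈ J.filter (fun j => (if h : j ∈ J then p0 ⟨j,h⟩ else ⟨0,hc⟩) = d), A r j
      = ∑ j ∈ Finset.univ.filter (fun j : {x // x ∈ J} => p0 j = d), B r j := by
    rw [Finset.sum_filter, Finset.sum_filter,
      ← Finset.sum_coe_sort J (fun j => if (if h : j ∈ J then p0 ⟨j,h⟩ else ⟨0,hc⟩) = d
          then A r j else 0)]
    refine Finset.sum_congr rfl fun j _ => ?_
    rcases j with ⟨j, hj⟩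
    simp [dif_pos hj, hB]
  rw [e1, e2]
  calc |∑ j ∈ Finset.univ.filter (fun j : {x // x ∈ J} => p0 j = d), B r j
        - 1/(c:ℝ) * ∑ j, B r j|
      ≤ ⨆ r' : Fin m, |∑ j ∈ Finset.univ.filter (fun j : {x // x ∈ J} => p0 j = d), B r' j
        - (1/(c:ℝ)) * ∑ j, B r' j| :=
        IR.le_fciSup (fun r' : Fin m =>
          |∑ j ∈ Finset.univ.filter (fun j : {x // x ∈ J} => p0 j = d), B r' j
          - (1/(c:ℝ)) * ∑ j, B r' j|) r
    _ ≤ ⨆ d' : Fin c, ⨆ r' : Fin m,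
        |∑ j ∈ Finset.univ.filter (fun j : {x // x ∈ J} => p0 j = d'), B r' j
        - (1/(c:ℝ)) * ∑ j, B r' j| :=
        IR.le_fciSup (fun d' : Fin c => ⨆ r' : Fin m,
          |∑ j ∈ Finset.univ.filter (fun j : {x // x ∈ J} => p0 j = d'), B r' j
          - (1/(c:ℝ)) * ∑ j, B r' j|) d
    _ ≤ mherdisc A c := hval

/-- One rounding step: divide the common value by `c`, rounding each column up or down
according to the colorings provided by `P`. -/
def IR.roundStep {n : ℕ} (c : ℕ) (P : Finset (Fin n) → (Fin n → Fin c)) :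
    ℕ × (Fin n → ℕ) → ℕ × (Fin n → ℕ) :=
  fun x => (x.1 / c, fun j =>
    if x.2 j = x.1 then
      (if ((P (Finset.univ.filter fun j' => x.2 j' = x.1) j : Fin c) : ℕ) < x.1 % c
       then x.1 / c + 1 else x.1 / c)
    else
      (if ((P (Finset.univ.filter fun j' => ¬ x.2 j' = x.1) j : Fin c) : ℕ) < x.1 % c + 1
       then x.1 / c + 1 else x.1 / c))

lemma IR.div_succ_bound {c : ℕ} (hc : 2 ≤ c) (u L : ℕ) (h : u + 1 ≤ c^L) :
    u / c + 1 ≤ c^(L-1) := by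
  rcases Nat.eq_zero_or_pos L with rfl | hL
  · simp only [pow_zero] at h
    have hu : u = 0 := by omega
    subst hu
    simp
  · have he : c * c^(L-1) = c^L := by
      rw [← pow_succ']
      congr 1
      omega
    have h2 : u < c * c^(L-1) := by omega
    have := Nat.div_lt_of_lt_mul h2
    omega

lemma IR.invariant {n : ℕ} {c : ℕ} (hc : 2 ≤ c) (P : Finset (Fin n) → (Fin n → Fin c))
    (ℓ N0 : ℕ) (hN0 : N0 ≤ c^ℓ) (i : ℕ) :
    (∀ j, ((IR.roundStep c P)^[i] (min N0 (c^ℓ - 1), fun _ => N0)).2 j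
        = ((IR.roundStep c P)^[i] (min N0 (c^ℓ - 1), fun _ => N0)).1
      ∨ ((IR.roundStep c P)^[i] (min N0 (c^ℓ - 1), fun _ => N0)).2 j
        = ((IR.roundStep c P)^[i] (min N0 (c^ℓ - 1), fun _ => N0)).1 + 1)
    ∧ ((IR.roundStep c P)^[i] (min N0 (c^ℓ - 1), fun _ => N0)).1 + 1 ≤ c^(ℓ - i) := by
  have hpow1 : 1 ≤ c^ℓ := Nat.one_le_pow _ _ (by omega)
  induction i with
  | zero =>
    simp only [Function.iterate_zero, id_eq, Nat.sub_zero]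
    constructor
    · intro j
      omega
    · omega
  | succ i ih =>
    obtain ⟨ih1, ih2⟩ := ih
    rw [Function.iterate_succ_apply']
    constructor
    · intro j
      dsimp only [IR.roundStep]
      split_ifs <;> simp
    · dsimp only [IR.roundStep]
      have h1 := IR.div_succ_bound hc _ _ ih2
      have h2 : ℓ - (i+1) = (ℓ - i) - 1 := by omega
      rw [h2]
      exact h1

lemma IR.row_bound {m n : ℕ} (A : Fin m → Fin n → ℝ) (c ℓ : ℕ) (hc : 3 ≤ c)
    (P : Finset (Fin n) → (Fin n → Fin c))
    (hP : ∀ J, ∀ (d : Fin c) (r : Fin m),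
      |∑ j ∈ J.filter (fun j => P J j = d), A r j - 1/(c:ℝ) * ∑ j ∈ J, A r j| ≤ mherdisc A c)
    (F : ℕ → ℕ × (Fin n → ℕ))
    (hFsucc : ∀ i, F (i+1) = IR.roundStep c P (F i))
    (hinv : ∀ i, (∀ j, (F i).2 j = (F i).1 ∨ (F i).2 j = (F i).1 + 1) ∧
      (F i).1 + 1 ≤ c^(ℓ - i)) :
    ∀ i, i < ℓ → ∀ r : Fin m,
      |∑ j, A r j * (((F i).2 j : ℝ)/(c:ℝ)^(ℓ-i) - ((F (i+1)).2 j : ℝ)/(c:ℝ)^(ℓ-(i+1)))|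
        ≤ ((c:ℝ)-1) * (c:ℝ)^((i:ℤ)+1-ℓ) * mherdisc A c := by
  intro i hi r
  have hcR : (0:ℝ) < c := by positivity
  have hN' : ∀ j, (F (i+1)).2 j =
      if (F i).2 j = (F i).1 then
        (if ((P (Finset.univ.filter fun j' => (F i).2 j' = (F i).1) j : Fin c) : ℕ) < (F i).1 % c
         then (F i).1 / c + 1 else (F i).1 / c)
      else
        (if ((P (Finset.univ.filter fun j' => ¬ (F i).2 j' = (F i).1) j : Fin c) : ℕ) < (F i).1 % c + 1
         then (F i).1 / c + 1 else (F i).1 / c) := by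
    intro j; rw [hFsucc]; rfl
  set u : ℕ := (F i).1 with hu
  set Nf : Fin n → ℕ := (F i).2 with hNf
  set s : ℕ := u % c with hs
  set v : ℕ := u / c with hv
  set J1 : Finset (Fin n) := Finset.univ.filter (fun j' => Nf j' = u) with hJ1
  set J2 : Finset (Fin n) := Finset.univ.filter (fun j' => ¬ Nf j' = u) with hJ2
  set p1 : Fin n → Fin c := P J1 with hp1
  set p2 : Fin n → Fin c := P J2 with hp2
  set D1 : Finset (Fin c) := Finset.univ.filter (fun d : Fin c => (d:ℕ) < s) with hD1
  set D2 : Finset (Fin c) := Finset.univ.filter (fun d : Fin c => ¬ (d:ℕ) < s + 1) with hD2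
  set L : ℕ := ℓ - i with hL
  have hL1 : 1 ≤ L := by omega
  have hLL : ℓ - (i+1) = L - 1 := by omega
  have hcL0 : (0:ℝ) < (c:ℝ)^L := by positivity
  have hcL1 : (0:ℝ) < (c:ℝ)^(L-1) := by positivity
  have hcLe : (c:ℝ)^L = (c:ℝ)^(L-1) * c := by
    rw [← pow_succ]; congr 1; omega
  have hsc : s < c := Nat.mod_lt _ (by omega)
  have huR : (u:ℝ) = c * v + s := by
    exact_mod_cast (Nat.div_add_mod u c).symm
  have hcard1 : D1.card = s := IR.card_filter_val_lt c s hsc.le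
  have hcard2 : D2.card = c - (s+1) := by
    have h1 := Finset.card_filter_add_card_filter_not
      (s := (Finset.univ : Finset (Fin c))) (p := fun d : Fin c => (d:ℕ) < s + 1)
    have h2 : ((Finset.univ : Finset (Fin c)).filter (fun d : Fin c => (d:ℕ) < s + 1)).card
        = s + 1 := IR.card_filter_val_lt c (s+1) hsc
    have h3 : ((Finset.univ : Finset (Fin c))).card = c := by simp
    rw [← hD2] at h1
    omega
  have hzpow : (c:ℝ)^((i:ℤ)+1-(ℓ:ℤ)) = (c:ℝ)/(c:ℝ)^L := by
    have h1 : (i:ℤ)+1-(ℓ:ℤ) = 1 - (L:ℤ) := by omega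
    rw [h1, zpow_sub₀ (ne_of_gt hcR), zpow_one, zpow_natCast]
  have hlo : ∀ j ∈ J1, A r j * ((Nf j:ℝ)/(c:ℝ)^L - ((F (i+1)).2 j:ℝ)/(c:ℝ)^(L-1))
      = (s:ℝ)/(c:ℝ)^L * A r j - (c:ℝ)/(c:ℝ)^L * (if (p1 j:ℕ) < s then A r j else 0) := by
    intro j hj
    have hNj : Nf j = u := by simpa [hJ1] using (Finset.mem_filter.1 hj).2
    rw [hN' j, if_pos hNj, hNj]
    split_ifs with h
    · rw [huR, hcLe]; push_cast; field_simp; ring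
    · rw [huR, hcLe]; push_cast; field_simp; ring
  have hX1 : ∑ j ∈ J1, (if (p1 j:ℕ) < s then A r j else 0)
      = ∑ d ∈ D1, ∑ j ∈ J1.filter (fun j => p1 j = d), A r j := by
    rw [← Finset.sum_filter, Finset.sum_fiberwise_eq_sum_filter J1 D1 p1 (A r)]
    apply Finset.sum_congr _ (fun _ _ => rfl)
    apply Finset.filter_congr
    intro j _
    simp [hD1]
  have hElo : ∑ j ∈ J1, A r j * ((Nf j:ℝ)/(c:ℝ)^L - ((F (i+1)).2 j:ℝ)/(c:ℝ)^(L-1))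
      = -((c:ℝ)/(c:ℝ)^L) * ∑ d ∈ D1, (∑ j ∈ J1.filter (fun j => p1 j = d), A r j
          - 1/(c:ℝ) * ∑ j ∈ J1, A r j) := by
    rw [Finset.sum_congr rfl hlo, Finset.sum_sub_distrib, ← Finset.mul_sum, ← Finset.mul_sum,
      hX1, Finset.sum_sub_distrib, Finset.sum_const, hcard1, nsmul_eq_mul]
    field_simp
    ring
  have hbndlo : |∑ j ∈ J1, A r j * ((Nf j:ℝ)/(c:ℝ)^L - ((F (i+1)).2 j:ℝ)/(c:ℝ)^(L-1))|
      ≤ (c:ℝ)/(c:ℝ)^L * ((s:ℝ) * mherdisc A c) := by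
    rw [hElo, abs_mul, abs_neg, abs_of_pos (by positivity : (0:ℝ) < (c:ℝ)/(c:ℝ)^L)]
    refine mul_le_mul_of_nonneg_left ?_ (by positivity)
    calc |∑ d ∈ D1, (∑ j ∈ J1.filter (fun j => p1 j = d), A r j
            - 1/(c:ℝ) * ∑ j ∈ J1, A r j)|
        ≤ ∑ d ∈ D1, |∑ j ∈ J1.filter (fun j => p1 j = d), A r j
            - 1/(c:ℝ) * ∑ j ∈ J1, A r j| := Finset.abs_sum_le_sum_abs _ _
      _ ≤ ∑ _d ∈ D1, mherdisc A c := Finset.sum_le_sum (fun d _ => hP J1 d r)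
      _ = (s:ℝ) * mherdisc A c := by rw [Finset.sum_const, hcard1, nsmul_eq_mul]
  have hhi : ∀ j ∈ J2, A r j * ((Nf j:ℝ)/(c:ℝ)^L - ((F (i+1)).2 j:ℝ)/(c:ℝ)^(L-1))
      = ((s:ℝ)+1-(c:ℝ))/(c:ℝ)^L * A r j
        + (c:ℝ)/(c:ℝ)^L * (if ¬ (p2 j:ℕ) < s + 1 then A r j else 0) := by
    intro j hj
    have hNj' : ¬ Nf j = u := by simpa [hJ2] using (Finset.mem_filter.1 hj).2
    have hNj : Nf j = u + 1 := by
      rcases (hinv i).1 j with h | h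
      · exact absurd h hNj'
      · exact h
    rw [hN' j, if_neg hNj', hNj]
    split_ifs with h
    · push_cast; rw [huR, hcLe]; field_simp; ring
    · push_cast; rw [huR, hcLe]; field_simp; ring
  have hX2 : ∑ j ∈ J2, (if ¬ (p2 j:ℕ) < s + 1 then A r j else 0)
      = ∑ d ∈ D2, ∑ j ∈ J2.filter (fun j => p2 j = d), A r j := by
    rw [← Finset.sum_filter, Finset.sum_fiberwise_eq_sum_filter J2 D2 p2 (A r)]
    apply Finset.sum_congr _ (fun _ _ => rfl)
    apply Finset.filter_congr
    intro j _
    simp [hD2]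
  have hcast2 : ((c - (s+1) : ℕ):ℝ) = (c:ℝ) - (s:ℝ) - 1 := by
    rw [Nat.cast_sub hsc]
    push_cast
    ring
  have hEhi : ∑ j ∈ J2, A r j * ((Nf j:ℝ)/(c:ℝ)^L - ((F (i+1)).2 j:ℝ)/(c:ℝ)^(L-1))
      = ((c:ℝ)/(c:ℝ)^L) * ∑ d ∈ D2, (∑ j ∈ J2.filter (fun j => p2 j = d), A r j
          - 1/(c:ℝ) * ∑ j ∈ J2, A r j) := by
    rw [Finset.sum_congr rfl hhi, Finset.sum_add_distrib, ← Finset.mul_sum, ← Finset.mul_sum,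
      hX2, Finset.sum_sub_distrib, Finset.sum_const, hcard2, nsmul_eq_mul, hcast2]
    field_simp
    ring
  have hbndhi : |∑ j ∈ J2, A r j * ((Nf j:ℝ)/(c:ℝ)^L - ((F (i+1)).2 j:ℝ)/(c:ℝ)^(L-1))|
      ≤ (c:ℝ)/(c:ℝ)^L * (((c:ℝ) - (s:ℝ) - 1) * mherdisc A c) := by
    rw [hEhi, abs_mul, abs_of_pos (by positivity : (0:ℝ) < (c:ℝ)/(c:ℝ)^L)]
    refine mul_le_mul_of_nonneg_left ?_ (by positivity)
    calc |∑ d ∈ D2, (∑ j ∈ J2.filter (fun j => p2 j = d), A r j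
            - 1/(c:ℝ) * ∑ j ∈ J2, A r j)|
        ≤ ∑ d ∈ D2, |∑ j ∈ J2.filter (fun j => p2 j = d), A r j
            - 1/(c:ℝ) * ∑ j ∈ J2, A r j| := Finset.abs_sum_le_sum_abs _ _
      _ ≤ ∑ _d ∈ D2, mherdisc A c := Finset.sum_le_sum (fun d _ => hP J2 d r)
      _ = ((c:ℝ) - (s:ℝ) - 1) * mherdisc A c := by
          rw [Finset.sum_const, hcard2, nsmul_eq_mul, hcast2]
  have hsplit : ∑ j, A r j * ((Nf j:ℝ)/(c:ℝ)^L - ((F (i+1)).2 j:ℝ)/(c:ℝ)^(L-1))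
      = (∑ j ∈ J1, A r j * ((Nf j:ℝ)/(c:ℝ)^L - ((F (i+1)).2 j:ℝ)/(c:ℝ)^(L-1)))
        + ∑ j ∈ J2, A r j * ((Nf j:ℝ)/(c:ℝ)^L - ((F (i+1)).2 j:ℝ)/(c:ℝ)^(L-1)) := by
    rw [hJ1, hJ2]
    exact (Finset.sum_filter_add_sum_filter_not Finset.univ (fun j' => Nf j' = u) _).symm
  simp only [hLL]
  rw [hsplit, hzpow]
  calc |(∑ j ∈ J1, A r j * ((Nf j:ℝ)/(c:ℝ)^L - ((F (i+1)).2 j:ℝ)/(c:ℝ)^(L-1)))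
        + ∑ j ∈ J2, A r j * ((Nf j:ℝ)/(c:ℝ)^L - ((F (i+1)).2 j:ℝ)/(c:ℝ)^(L-1))|
      ≤ |∑ j ∈ J1, A r j * ((Nf j:ℝ)/(c:ℝ)^L - ((F (i+1)).2 j:ℝ)/(c:ℝ)^(L-1))|
        + |∑ j ∈ J2, A r j * ((Nf j:ℝ)/(c:ℝ)^L - ((F (i+1)).2 j:ℝ)/(c:ℝ)^(L-1))| := abs_add_le _ _
    _ ≤ (c:ℝ)/(c:ℝ)^L * ((s:ℝ) * mherdisc A c)
        + (c:ℝ)/(c:ℝ)^L * (((c:ℝ) - (s:ℝ) - 1) * mherdisc A c) := add_le_add hbndlo hbndhi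
    _ = ((c:ℝ)-1) * ((c:ℝ)/(c:ℝ)^L) * mherdisc A c := by ring

lemma IR.geo_bound {c : ℕ} (hc : 2 ≤ c) (M : ℕ) :
    (∑ i ∈ Finset.range M, ((c:ℝ)-1) * (c:ℝ)^((i:ℤ)+1-(M:ℤ))) ≤ c := by
  have hcR : (0:ℝ) < c := by positivity
  have hcR1 : (1:ℝ) ≤ c := by exact_mod_cast Nat.one_le_of_lt hc
  induction M with
  | zero => simpa using hcR.le
  | succ M ih =>
    rw [Finset.sum_range_succ]
    have hlast : ((c:ℝ)-1) * (c:ℝ)^((M:ℤ)+1-((M+1:ℕ):ℤ)) = (c:ℝ)-1 := by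
      have h0 : (M:ℤ)+1-((M+1:ℕ):ℤ) = 0 := by push_cast; ring
      rw [h0, zpow_zero, mul_one]
    have hterm : ∀ i ∈ Finset.range M, ((c:ℝ)-1) * (c:ℝ)^((i:ℤ)+1-((M+1:ℕ):ℤ))
        = (((c:ℝ)-1) * (c:ℝ)^((i:ℤ)+1-(M:ℤ))) / c := by
      intro i _
      have h0 : (i:ℤ)+1-((M+1:ℕ):ℤ) = ((i:ℤ)+1-(M:ℤ)) - 1 := by push_cast; ring
      rw [h0, zpow_sub₀ (ne_of_gt hcR), zpow_one]
      ring
    rw [Finset.sum_congr rfl hterm, ← Finset.sum_div, hlast]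
    have h2 : (∑ i ∈ Finset.range M, ((c:ℝ)-1) * (c:ℝ)^((i:ℤ)+1-(M:ℤ))) / c ≤ 1 := by
      rw [div_le_one hcR]
      calc (∑ i ∈ Finset.range M, ((c:ℝ)-1) * (c:ℝ)^((i:ℤ)+1-(M:ℤ))) ≤ c := ih
        _ = c := rfl
    linarith

/-- Iterated rounding: for odd c ≥ 3, t ∈ M_{c,ℓ} and the constant floating coloring p ≡ t,
there are floating colorings q⁰ = p, q¹, …, q^ℓ such that q^i takes values in M_{c,ℓ−i},
q^i takes at most two distinct values, d_A(q^i, q^{i+1}) ≤ (c−1)·c^{−ℓ+i+1}·herdisc(A, c) for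
i < ℓ, q^ℓ takes values in {0,1}, and d_A(p, q^ℓ) ≤ c·herdisc(A, c). -/
theorem iterated_rounding {m n : ℕ} (hm : 0 < m) (hn : 0 < n)
    (A : Fin m → Fin n → ℝ) (c ℓ : ℕ) (hc : 3 ≤ c) (hodd : Odd c)
    (t : ℝ) (ht : t ∈ Mset c ℓ) :
    ∃ q : ℕ → Fin n → ℝ,
      q 0 = (fun _ => t) ∧
      (∀ i ≤ ℓ, ∀ j, q i j ∈ Mset c (ℓ - i)) ∧
      (∀ i ≤ ℓ, (Finset.univ.image (q i)).card ≤ 2) ∧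
      (∀ i < ℓ, dA A (q i) (q (i + 1)) ≤
        ((c : ℝ) - 1) * (c : ℝ) ^ ((i : ℤ) + 1 - ℓ) * mherdisc A c) ∧
      (∀ j, q ℓ j = 0 ∨ q ℓ j = 1) ∧
      dA A (fun _ => t) (q ℓ) ≤ (c : ℝ) * mherdisc A c := by
  classical
  haveI hmne : Nonempty (Fin m) := ⟨⟨0, hm⟩⟩
  have hc2 : 2 ≤ c := by omega
  have hc0 : 0 < c := by omega
  have hcR : (0:ℝ) < c := by positivity
  have hH0 : 0 ≤ mherdisc A c := IR.mherdisc_nonneg A hc0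
  obtain ⟨N0, hN0le, hN0⟩ := IR.Mset_num hc2 ht
  choose P hP using fun J => IR.exists_coloring hm A hc0 J
  set F : ℕ → ℕ × (Fin n → ℕ) :=
    fun i => (IR.roundStep c P)^[i] (min N0 (c^ℓ - 1), fun _ => N0) with hF
  have hFsucc : ∀ i, F (i+1) = IR.roundStep c P (F i) := fun i =>
    Function.iterate_succ_apply' _ _ _
  have hinv : ∀ i, (∀ j, (F i).2 j = (F i).1 ∨ (F i).2 j = (F i).1 + 1) ∧
      (F i).1 + 1 ≤ c^(ℓ - i) := fun i => IR.invariant hc2 P ℓ N0 hN0le i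
  have hvals : ∀ i j, (F i).2 j ≤ c^(ℓ - i) := by
    intro i j
    rcases (hinv i).1 j with h | h <;> (rw [h]; have := (hinv i).2; omega)
  have hq0 : ∀ j, ((F 0).2 j : ℝ) / (c:ℝ)^(ℓ - 0) = t := by
    intro j
    simp only [hF, Function.iterate_zero, id_eq, Nat.sub_zero]
    rw [hN0]
  have hrow := IR.row_bound A c ℓ hc P hP F hFsucc hinv
  refine ⟨fun i j => ((F i).2 j : ℝ) / (c:ℝ)^(ℓ - i), ?_, ?_, ?_, ?_, ?_, ?_⟩
  · funext j
    exact hq0 j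
  · intro i _ j
    exact IR.mem_Mset_of_natCast hc2 (ℓ - i) _ (hvals i j)
  · intro i _
    have hsub : (Finset.univ.image (fun j => ((F i).2 j : ℝ)/(c:ℝ)^(ℓ-i)))
        ⊆ {((F i).1 : ℝ)/(c:ℝ)^(ℓ-i), (((F i).1 + 1 : ℕ) : ℝ)/(c:ℝ)^(ℓ-i)} := by
      intro x hx
      simp only [Finset.mem_image] at hx
      obtain ⟨j, _, rfl⟩ := hx
      rcases (hinv i).1 j with h | h <;> simp [h]
    refine le_trans (Finset.card_le_card hsub) ?_
    refine le_trans (Finset.card_insert_le _ _) ?_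
    simp
  · intro i hi
    refine ciSup_le fun r => ?_
    exact hrow i hi r
  · intro j
    have h1 : (F ℓ).1 + 1 ≤ c^(ℓ - ℓ) := (hinv ℓ).2
    simp only [Nat.sub_self, pow_zero] at h1
    have h2 : (F ℓ).1 = 0 := by omega
    rcases (hinv ℓ).1 j with h | h
    · left
      show ((F ℓ).2 j : ℝ)/(c:ℝ)^(ℓ-ℓ) = 0
      rw [h, h2]
      simp
    · right
      show ((F ℓ).2 j : ℝ)/(c:ℝ)^(ℓ-ℓ) = 1
      rw [h, h2]
      simp
  · refine ciSup_le fun r => ?_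
    have tele : ∀ j, t - ((F ℓ).2 j : ℝ)/(c:ℝ)^(ℓ-ℓ)
        = ∑ i ∈ Finset.range ℓ, (((F i).2 j : ℝ)/(c:ℝ)^(ℓ-i)
            - ((F (i+1)).2 j : ℝ)/(c:ℝ)^(ℓ-(i+1))) := by
      intro j
      rw [Finset.sum_range_sub' (fun i => ((F i).2 j : ℝ)/(c:ℝ)^(ℓ-i)) ℓ, hq0 j]
    calc |∑ j, A r j * (t - ((F ℓ).2 j : ℝ)/(c:ℝ)^(ℓ-ℓ))|
        = |∑ i ∈ Finset.range ℓ, ∑ j, A r j * (((F i).2 j : ℝ)/(c:ℝ)^(ℓ-i)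
            - ((F (i+1)).2 j : ℝ)/(c:ℝ)^(ℓ-(i+1)))| := by
          rw [Finset.sum_comm]
          congr 1
          refine Finset.sum_congr rfl fun j _ => ?_
          rw [tele j, Finset.mul_sum]
      _ ≤ ∑ i ∈ Finset.range ℓ, |∑ j, A r j * (((F i).2 j : ℝ)/(c:ℝ)^(ℓ-i)
            - ((F (i+1)).2 j : ℝ)/(c:ℝ)^(ℓ-(i+1)))| := Finset.abs_sum_le_sum_abs _ _
      _ ≤ ∑ i ∈ Finset.range ℓ, ((c:ℝ)-1) * (c:ℝ)^((i:ℤ)+1-(ℓ:ℤ)) * mherdisc A c :=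
          Finset.sum_le_sum (fun i hi => hrow i (Finset.mem_range.1 hi) r)
      _ = (∑ i ∈ Finset.range ℓ, ((c:ℝ)-1) * (c:ℝ)^((i:ℤ)+1-(ℓ:ℤ))) * mherdisc A c := by
          rw [Finset.sum_mul]
      _ ≤ (c:ℝ) * mherdisc A c :=
          mul_le_mul_of_nonneg_right (IR.geo_bound hc2 ℓ) hH0
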